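/- arXiv:2212.05899 — 5 statements merged into one kernel-verified Lean document; each statement's English description precedes it below -/
import Mathlib

section
/- (Slice theorem) Let A be a commutative K-algebra over a field K of characteristic zero, ∂ a locally nilpotent derivation of A, and s ∈ A with ∂(s) = 1, and let B = Ker ∂. Then the map π : A → B defined by π(f) = Σᵢ (−s)ⁱ∂ⁱ(f)/i! is a K-algebra homomorphism onto B with π|_B = id, and A is generated as a B-algebra by s, so that A = B[s]. -/
open scoped BigOperators
open Finset

set_option linter.unusedSectionVars false

section aux
variable {K : Type*} [Field K] [CharZero K] {A : Type*} [CommRing A] [Algebra K A]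

lemma pow_succ_apply (D : Derivation K A A) (m : ℕ) (x : A) :
    (D.toLinearMap ^ (m+1)) x = D ((D.toLinearMap ^ m) x) := by
  rw [pow_succ']; rfl

lemma D_mul (D : Derivation K A A) (x y : A) : D (x * y) = D x * y + x * D y := by
  rw [Derivation.leibniz, smul_eq_mul, smul_eq_mul]; ring

lemma iter_leibniz (D : Derivation K A A) (n : ℕ) (p q : A) :
    (D.toLinearMap ^ n) (p * q) =
      ∑ k ∈ range (n+1),
        (n.choose k) • ((D.toLinearMap ^ (n-k)) p * (D.toLinearMap ^ k) q) := by
  set L := D.toLinearMap with hL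
  induction n with
  | zero => simp
  | succ n IH =>
    calc
      (L ^ (n + 1)) (p * q) =
          D (∑ k ∈ range n.succ, n.choose k • ((L^(n - k)) p * (L^k) q)) := by
        rw [pow_succ_apply, IH]
      _ = (∑ k ∈ range n.succ,
            n.choose k • ((L^(n - k + 1)) p * (L^k) q)) +
          ∑ k ∈ range n.succ,
            n.choose k • ((L^(n - k)) p * (L^(k + 1)) q) := by
        rw [map_sum, ← sum_add_distrib]
        refine sum_congr rfl fun k _ => ?_
        rw [map_nsmul, D_mul, ← pow_succ_apply, ← pow_succ_apply, smul_add]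
      _ = (∑ k ∈ range n.succ,
                n.choose k.succ • ((L^(n - k)) p * (L^(k + 1)) q)) +
              1 • ((L^(n + 1)) p * (L^0) q) +
            ∑ k ∈ range n.succ, n.choose k • ((L^(n - k)) p * (L^(k + 1)) q) :=
        ?_
      _ = ((∑ k ∈ range n.succ, n.choose k • ((L^(n - k)) p * (L^(k + 1)) q)) +
              ∑ k ∈ range n.succ,
                n.choose k.succ • ((L^(n - k)) p * (L^(k + 1)) q)) +
            1 • ((L^(n + 1)) p * (L^0) q) := by
        rw [add_comm, add_assoc]
      _ = (∑ i ∈ range n.succ,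
              (n + 1).choose (i + 1) • ((L^(n + 1 - (i + 1))) p * (L^(i + 1)) q)) +
            1 • ((L^(n + 1)) p * (L^0) q) := by
        simp_rw [Nat.choose_succ_succ, Nat.succ_sub_succ, add_smul, sum_add_distrib]
      _ = ∑ k ∈ range n.succ.succ,
            n.succ.choose k • ((L^(n.succ - k)) p * (L^k) q) := by
        rw [sum_range_succ' _ n.succ, Nat.choose_zero_right, tsub_zero]
    congr
    refine (sum_range_succ' _ _).trans (congr_arg₂ (· + ·) ?_ ?_)
    · rw [sum_range_succ, Nat.choose_succ_self, zero_smul, add_zero]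
      refine sum_congr rfl fun k hk => ?_
      rw [mem_range] at hk
      congr
      omega
    · rw [Nat.choose_zero_right, tsub_zero]

lemma stable (D : Derivation K A A) {n m : ℕ} {f : A} (h : (D.toLinearMap ^ n) f = 0)
    (hnm : n ≤ m) : (D.toLinearMap ^ m) f = 0 := by
  obtain ⟨k, rfl⟩ := Nat.exists_eq_add_of_le hnm
  rw [add_comm, pow_add, Module.End.mul_apply, h, map_zero]

noncomputable def dix (D : Derivation K A A) (s : A) (f : A) (n : ℕ) : A :=
  ∑ i ∈ Finset.range n, ((i.factorial : K)⁻¹) • ((-s) ^ i * (D.toLinearMap ^ i) f)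

lemma dix_eq_of_le (D : Derivation K A A) (s f : A) {n m : ℕ}
    (h : (D.toLinearMap ^ n) f = 0) (hnm : n ≤ m) : dix D s f m = dix D s f n := by
  unfold dix
  refine (Finset.sum_subset (Finset.range_subset_range.2 hnm) fun i _ hi => ?_).symm
  rw [Finset.mem_range, not_lt] at hi
  rw [stable D h hi, mul_zero, smul_zero]

lemma dix_eq (D : Derivation K A A) (s f : A) {n m : ℕ}
    (h : (D.toLinearMap ^ n) f = 0) (h' : (D.toLinearMap ^ m) f = 0) :
    dix D s f m = dix D s f n := by
  rcases le_total n m with hle | hle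
  · exact dix_eq_of_le D s f h hle
  · exact (dix_eq_of_le D s f h' hle).symm

lemma D_dix (D : Derivation K A A) (s : A) (hs : D s = 1) (f : A) {n : ℕ}
    (h : (D.toLinearMap ^ n) f = 0) : D (dix D s f n) = 0 := by
  have key : ∀ m : ℕ, D (dix D s f (m+1)) =
      ((m.factorial : K)⁻¹) • ((-s) ^ m * (D.toLinearMap ^ (m+1)) f) := by
    intro m
    induction m with
    | zero => simp [dix]
    | succ m ih =>
      have hsum : dix D s f (m+2) = dix D s f (m+1) +
          (((m+1).factorial : K)⁻¹) • ((-s) ^ (m+1) * (D.toLinearMap ^ (m+1)) f) := by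
        rw [dix, Finset.sum_range_succ]; rfl
      rw [hsum, map_add, ih, Derivation.map_smul, Derivation.leibniz, smul_eq_mul, smul_eq_mul]
      have hDs : D ((-s)^(m+1)) = -((m+1 : ℕ) • (-s)^m) := by
        rw [Derivation.leibniz_pow, Nat.add_sub_cancel, map_neg, hs, smul_eq_mul, mul_neg_one,
          smul_neg]
      rw [hDs, ← pow_succ_apply]
      have h1 : ((m+1 : ℕ) : K) ≠ 0 := Nat.cast_ne_zero.2 (Nat.succ_ne_zero m)
      have hfac : (((m+1).factorial : K)⁻¹) * ((m+1 : ℕ) : K) = ((m.factorial : K)⁻¹) := by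
        rw [Nat.factorial_succ, Nat.cast_mul, mul_inv, mul_comm (((m+1:ℕ):K))⁻¹, mul_assoc,
          inv_mul_cancel₀ h1, mul_one]
      have hx : (D.toLinearMap ^ (m+1)) f * -((m+1) • (-s)^m) =
          -((m+1) • ((-s)^m * (D.toLinearMap ^ (m+1)) f)) := by
        simp only [nsmul_eq_mul]; ring
      rw [hx, smul_add, smul_neg, ← Nat.cast_smul_eq_nsmul K, smul_smul, hfac]
      abel
  cases n with
  | zero =>
    have : f = 0 := by simpa using h
    simp [this, dix]
  | succ m =>
    rw [key m, h, mul_zero, smul_zero]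
end aux

section more
variable {K : Type*} [Field K] [CharZero K] {A : Type*} [CommRing A] [Algebra K A]

lemma dix_add (D : Derivation K A A) (s f g : A) (n : ℕ) :
    dix D s (f + g) n = dix D s f n + dix D s g n := by
  unfold dix
  rw [← Finset.sum_add_distrib]
  refine Finset.sum_congr rfl fun i _ => ?_
  rw [map_add, mul_add, smul_add]

lemma dix_of_ker (D : Derivation K A A) (s f : A) (hf : D f = 0) : dix D s f 1 = f := by
  simp [dix]

lemma pow_s_pow (D : Derivation K A A) (s : A) (hs : D s = 1) (n : ℕ) :
    (D.toLinearMap ^ n) (s ^ n) = (n.factorial : A) := by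
  induction n with
  | zero => simp
  | succ n ih =>
    have step : ∀ m : ℕ, D (s ^ (m+1)) = (m+1 : ℕ) • s ^ m := by
      intro m
      rw [Derivation.leibniz_pow, Nat.add_sub_cancel, hs, smul_eq_mul, mul_one]
    have : (D.toLinearMap ^ (n+1)) (s ^ (n+1))
        = (D.toLinearMap ^ n) (D (s ^ (n+1))) := by
      rw [pow_succ]; rfl
    rw [this, step, map_nsmul, ih, Nat.factorial_succ, nsmul_eq_mul]
    push_cast
    ring
end more

section mul
variable {K : Type*} [Field K] [CharZero K] {A : Type*} [CommRing A] [Algebra K A]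

lemma pow_mul_zero (D : Derivation K A A) {N : ℕ} {f g : A}
    (hf : (D.toLinearMap ^ N) f = 0) (hg : (D.toLinearMap ^ N) g = 0) :
    (D.toLinearMap ^ (2*N)) (f * g) = 0 := by
  rw [iter_leibniz]
  refine Finset.sum_eq_zero fun k hk => ?_
  rw [Finset.mem_range] at hk
  rcases le_or_gt N k with h | h
  · rw [stable D hg h, mul_zero, smul_zero]
  · have : N ≤ 2*N - k := by omega
    rw [stable D hf this, zero_mul, smul_zero]

lemma dix_mul (D : Derivation K A A) (s : A) {N : ℕ} {f g : A}
    (hf : (D.toLinearMap ^ N) f = 0) (hg : (D.toLinearMap ^ N) g = 0) :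
    dix D s (f * g) (2*N) = dix D s f N * dix D s g N := by
  set L := D.toLinearMap with hL
  set b : ℕ → ℕ → A := fun k j =>
    (((k.factorial : K)⁻¹) * ((j.factorial : K)⁻¹)) •
      (((-s) ^ k * (L ^ k) f) * ((-s) ^ j * (L ^ j) g)) with hb
  have hbf : ∀ k j, N ≤ k → b k j = 0 := by
    intro k j hk
    simp only [hb, hL, stable D hf hk, mul_zero, zero_mul, smul_zero]
  have hbg : ∀ k j, N ≤ j → b k j = 0 := by
    intro k j hj
    simp only [hb, hL, stable D hg hj, mul_zero, smul_zero]
  have step1 : dix D s (f * g) (2*N) =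
      ∑ i ∈ Finset.range (2*N), ∑ k ∈ Finset.range (i+1), b (i-k) k := by
    unfold dix
    refine Finset.sum_congr rfl fun i _ => ?_
    rw [iter_leibniz, Finset.mul_sum, Finset.smul_sum]
    refine Finset.sum_congr rfl fun k hk => ?_
    rw [Finset.mem_range, Nat.lt_succ_iff] at hk
    have hcoef : ((i.factorial : K)⁻¹) * ((i.choose k : ℕ) : K) =
        (((i-k).factorial : K)⁻¹) * ((k.factorial : K)⁻¹) := by
      have := Nat.choose_mul_factorial_mul_factorial hk
      have hi : (i.factorial : K) = ((i.choose k : ℕ) : K) *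
          ((k.factorial : K)) * (((i-k).factorial : K)) := by
        rw [← Nat.cast_mul, ← Nat.cast_mul, this]
      rw [hi]
      have h1 : ((k.factorial : K)) ≠ 0 := Nat.cast_ne_zero.2 k.factorial_ne_zero
      have h2 : (((i-k).factorial : K)) ≠ 0 := Nat.cast_ne_zero.2 (i-k).factorial_ne_zero
      have h3 : ((i.choose k : ℕ) : K) ≠ 0 := Nat.cast_ne_zero.2 (Nat.choose_pos hk).ne'
      field_simp
    have hpow : (-s) ^ i = (-s) ^ (i-k) * (-s) ^ k := by
      rw [← pow_add, Nat.sub_add_cancel hk]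
    rw [mul_smul_comm, ← Nat.cast_smul_eq_nsmul K (i.choose k), smul_smul, hcoef, hb, hpow]
    congr 1
    ring
  have step2 : (∑ i ∈ Finset.range (2*N), ∑ k ∈ Finset.range (i+1), b (i-k) k) =
      ∑ m ∈ Finset.range (2*N), ∑ k ∈ Finset.range (2*N - m), b k m := by
    exact Finset.sum_range_diag_flip (2*N) (fun a c => b c a)
  have step3 : (∑ m ∈ Finset.range (2*N), ∑ k ∈ Finset.range (2*N - m), b k m) =
      ∑ m ∈ Finset.range N, ∑ k ∈ Finset.range N, b k m := by
    rw [← Finset.sum_subset (Finset.range_subset_range.2 (by omega : N ≤ 2*N))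
      (fun m _ hm => ?_)]
    · refine Finset.sum_congr rfl fun m hm => ?_
      rw [Finset.mem_range] at hm
      refine (Finset.sum_subset (Finset.range_subset_range.2 (by omega : N ≤ 2*N - m))
        (fun k _ hk => ?_)).symm
      rw [Finset.mem_range, not_lt] at hk
      exact hbf k m hk
    · rw [Finset.mem_range, not_lt] at hm
      exact Finset.sum_eq_zero fun k _ => hbg k m hm
  have step4 : dix D s f N * dix D s g N =
      ∑ m ∈ Finset.range N, ∑ k ∈ Finset.range N, b k m := by
    unfold dix
    rw [Finset.sum_mul_sum, Finset.sum_comm]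
    refine Finset.sum_congr rfl fun m _ => Finset.sum_congr rfl fun k _ => ?_
    rw [hb, smul_mul_smul_comm]
  rw [step1, step2, step3, step4]
end mul

section final
variable {K : Type*} [Field K] [CharZero K] {A : Type*} [CommRing A] [Algebra K A]

lemma mem_adjoin (D : Derivation K A A) (s : A) (hs : D s = 1) :
    ∀ (n : ℕ) (f : A), (D.toLinearMap ^ n) f = 0 →
      f ∈ Algebra.adjoin K (insert s {f : A | D f = 0}) := by
  intro n
  induction n with
  | zero =>
    intro f hf
    have : f = 0 := by simpa using hf
    rw [this]; exact Subalgebra.zero_mem _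
  | succ n IH =>
    intro f hf
    set a := (D.toLinearMap ^ n) f with ha
    have hDa : D a = 0 := by rw [ha, ← pow_succ_apply, hf]
    have haz : ∀ k : ℕ, 1 ≤ k → (D.toLinearMap ^ k) a = 0 := by
      intro k hk
      exact stable D (show (D.toLinearMap ^ 1) a = 0 by simpa using hDa) hk
    set g := f - ((n.factorial : K)⁻¹) • (s ^ n * a) with hg
    have hLg : (D.toLinearMap ^ n) g = 0 := by
      rw [hg, map_sub, map_smul, iter_leibniz]
      rw [Finset.sum_eq_single 0 (fun k _ hk => by
          rw [haz k (Nat.one_le_iff_ne_zero.2 hk), mul_zero, smul_zero])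
        (by intro h; exact absurd (Finset.mem_range.2 (Nat.succ_pos n)) h)]
      simp only [Nat.choose_zero_right, one_smul, Nat.sub_zero, pow_zero]
      rw [pow_s_pow D s hs]
      simp only [pow_zero, Module.End.one_apply]
      have : (n.factorial : A) * a = (n.factorial : ℕ) • a := by
        simp [nsmul_eq_mul]
      rw [this, ← Nat.cast_smul_eq_nsmul K, smul_smul,
        inv_mul_cancel₀ (Nat.cast_ne_zero.2 n.factorial_ne_zero), one_smul, ← ha, sub_self]
    have hga : g ∈ Algebra.adjoin K (insert s {f : A | D f = 0}) := IH g hLg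
    have hsA : s ∈ Algebra.adjoin K (insert s {f : A | D f = 0}) :=
      Algebra.subset_adjoin (Set.mem_insert s _)
    have haA : a ∈ Algebra.adjoin K (insert s {f : A | D f = 0}) :=
      Algebra.subset_adjoin (Set.mem_insert_of_mem s hDa)
    have : f = g + ((n.factorial : K)⁻¹) • (s ^ n * a) := by rw [hg]; ring
    rw [this]
    exact Subalgebra.add_mem _ hga
      (Subalgebra.smul_mem _ (Subalgebra.mul_mem _ (Subalgebra.pow_mem _ hsA n) haA) _)
end final

/-- Slice theorem: if `D` is a locally nilpotent derivation of a commutative `K`-algebra `A`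
(`char K = 0`) with a slice `s` (`D s = 1`), then the Dixmier map
`π(f) = Σᵢ (−s)ⁱ Dⁱ(f)/i!` is a `K`-algebra homomorphism of `A` into `A` whose image lies in
`B = Ker D`, which restricts to the identity on `B`, and `A` is generated as a `B`-algebra
by `s` (i.e. `A` is generated by `Ker D` together with `s`). -/
theorem slice_theorem (K : Type*) [Field K] [CharZero K]
    (A : Type*) [CommRing A] [Algebra K A]
    (D : Derivation K A A)
    (hD : ∀ f : A, ∃ m : ℕ, (D.toLinearMap ^ m) f = 0)
    (s : A) (hs : D s = 1) :
    ∃ π : A →ₐ[K] A,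
      (∀ (f : A) (n : ℕ), (D.toLinearMap ^ n) f = 0 →
        π f = ∑ i ∈ Finset.range n,
          ((i.factorial : K)⁻¹) • ((-s) ^ i * (D.toLinearMap ^ i) f)) ∧
      (∀ f : A, D (π f) = 0) ∧
      (∀ f : A, D f = 0 → π f = f) ∧
      Algebra.adjoin K (insert s {f : A | D f = 0}) = ⊤ := by
  classical
  set N : A → ℕ := fun f => (hD f).choose with hN
  have hNf : ∀ f : A, (D.toLinearMap ^ (N f)) f = 0 := fun f => (hD f).choose_spec
  set π0 : A → A := fun f => dix D s f (N f) with hπ0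
  have hrep : ∀ (f : A) (n : ℕ), (D.toLinearMap ^ n) f = 0 → π0 f = dix D s f n := by
    intro f n h
    exact dix_eq D s f h (hNf f)
  have hker : ∀ f : A, D f = 0 → π0 f = f := by
    intro f h
    rw [hrep f 1 (by simpa using h), dix_of_ker D s f h]
  refine ⟨{ toFun := π0
            map_one' := hker 1 D.map_one_eq_zero
            map_mul' := ?_
            map_zero' := by
              show π0 0 = 0
              rw [hrep 0 0 (map_zero _)]; simp [dix]
            map_add' := ?_
            commutes' := fun r => hker _ (Derivation.map_algebraMap D r) }, ?_, ?_, ?_, ?_⟩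
  · intro f g
    show π0 (f * g) = π0 f * π0 g
    set n := max (N f) (N g) with hn
    have hf : (D.toLinearMap ^ n) f = 0 := stable D (hNf f) (le_max_left _ _)
    have hg : (D.toLinearMap ^ n) g = 0 := stable D (hNf g) (le_max_right _ _)
    rw [hrep (f*g) (2*n) (pow_mul_zero D hf hg), hrep f n hf, hrep g n hg, dix_mul D s hf hg]
  · intro f g
    show π0 (f + g) = π0 f + π0 g
    set n := max (N f) (N g) with hn
    have hf : (D.toLinearMap ^ n) f = 0 := stable D (hNf f) (le_max_left _ _)
    have hg : (D.toLinearMap ^ n) g = 0 := stable D (hNf g) (le_max_right _ _)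
    rw [hrep (f+g) n (by rw [map_add, hf, hg, add_zero]), hrep f n hf, hrep g n hg,
      dix_add D s f g n]
  · exact fun f n h => hrep f n h
  · exact fun f => D_dix D s hs f (hNf f)
  · exact hker
  · rw [eq_top_iff]
    exact fun f _ => mem_adjoin D s hs (N f) f (hNf f)
end

section
/- Let A be a commutative K-algebra with a ℤ-grading, char K = 0, and let δ be a locally nilpotent derivation of A. Write δ = δ_l + δ_{l+1} + ... + δ_k as a sum of homogeneous components with δ_l ≠ 0 the lowest component. Then δ_l is a locally nilpotent derivation. -/
/-!
Let `f` be a linear endomorphism of a graded module and `g` its homogeneous component of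
lowest degree `l`, so that `f - g` sends degree `n` into degrees `> n + l`. For homogeneous `x`
of degree `n`, induction on `m` shows that `f^m x` is `g^m x`, of degree `n + m • l`, plus terms
of degree `> n + m • l`. Hence `f^m x = 0` forces `g^m x = 0`. Local nilpotence then passes from
homogeneous elements to all of `M`, since the elements killed by a power of `g` form a submodule,
the maximal generalized eigenspace of `g` for the eigenvalue `0`.
-/

section degreeGT

variable {ι R M : Type*} [Preorder ι] [Semiring R] [AddCommMonoid M] [Module R M]
  (𝒜 : ι → Submodule R M)

def degreeGT (d : ι) : Submodule R M :=
  ⨆ j : Set.Ioi d, 𝒜 j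

variable {𝒜}

theorem degreeGT_le_iff {d : ι} {p : Submodule R M} :
    degreeGT 𝒜 d ≤ p ↔ ∀ j, d < j → 𝒜 j ≤ p :=
  iSup_le_iff.trans Subtype.forall

theorem le_degreeGT {d j : ι} (h : d < j) : 𝒜 j ≤ degreeGT 𝒜 d :=
  le_iSup (fun j : Set.Ioi d => 𝒜 j) ⟨j, h⟩

theorem degreeGT_antitone : Antitone (degreeGT 𝒜) :=
  fun _ _ hde => degreeGT_le_iff.2 fun _ hj => le_degreeGT (hde.trans_lt hj)

theorem decompose_eq_zero_of_mem_degreeGT [DecidableEq ι] [DirectSum.Decomposition 𝒜]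
    {d j : ι} (hj : j ≤ d) {x : M} (hx : x ∈ degreeGT 𝒜 d) :
    (DirectSum.decompose 𝒜 x j : M) = 0 := by
  refine Submodule.iSup_induction (motive := fun y => (DirectSum.decompose 𝒜 y j : M) = 0)
    _ hx ?_ ?_ ?_
  · rintro ⟨i, hi⟩ y hy
    exact DirectSum.decompose_of_mem_ne 𝒜 hy (hj.trans_lt hi).ne'
  · simp
  · intro y z hy hz
    simp [DirectSum.decompose_add, hy, hz]

theorem eq_zero_of_mem_of_mem_degreeGT [DecidableEq ι] [DirectSum.Decomposition 𝒜]
    {d : ι} {x : M} (hx : x ∈ 𝒜 d) (hx' : x ∈ degreeGT 𝒜 d) : x = 0 := by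
  rw [← DirectSum.decompose_of_mem_same 𝒜 hx]
  exact decompose_eq_zero_of_mem_degreeGT le_rfl hx'

end degreeGT

theorem pow_apply_mem_of_homogeneous {ι R M : Type*} [AddMonoid ι] [Semiring R]
    [AddCommMonoid M] [Module R M] {𝒜 : ι → Submodule R M} {g : Module.End R M} {l : ι}
    (hg : ∀ n, ∀ x ∈ 𝒜 n, g x ∈ 𝒜 (n + l))
    (m : ℕ) {n : ι} {x : M} (hx : x ∈ 𝒜 n) : (g ^ m) x ∈ 𝒜 (n + m • l) := by
  induction m with
  | zero => simpa using hx
  | succ m ih =>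
    rw [pow_succ', Module.End.mul_apply, succ_nsmul, ← add_assoc]
    exact hg _ _ ih

section lowestComponent

variable {ι R M : Type*} [AddCommMonoid ι] [PartialOrder ι] [IsOrderedCancelAddMonoid ι]
  [Ring R] [AddCommGroup M] [Module R M] {𝒜 : ι → Submodule R M}
  {f g : Module.End R M} {l : ι}
  (hg : ∀ n, ∀ x ∈ 𝒜 n, g x ∈ 𝒜 (n + l))
  (hfg : ∀ n, ∀ x ∈ 𝒜 n, (f - g) x ∈ degreeGT 𝒜 (n + l))
include hg hfg

theorem apply_mem_degreeGT_of_sub_mem_degreeGT {d : ι} {x : M} (hx : x ∈ degreeGT 𝒜 d) :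
    f x ∈ degreeGT 𝒜 (d + l) := by
  suffices degreeGT 𝒜 d ≤ (degreeGT 𝒜 (d + l)).comap f from this hx
  refine degreeGT_le_iff.2 fun j hj y hy => ?_
  have hlt : d + l < j + l := add_lt_add_left hj l
  rw [Submodule.mem_comap, ← sub_add_cancel f g, LinearMap.add_apply]
  exact add_mem (degreeGT_antitone hlt.le (hfg j y hy)) (le_degreeGT hlt (hg j y hy))

theorem pow_apply_sub_pow_apply_mem_degreeGT (m : ℕ) {n : ι} {x : M} (hx : x ∈ 𝒜 n) :
    (f ^ m) x - (g ^ m) x ∈ degreeGT 𝒜 (n + m • l) := by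
  induction m with
  | zero => simp
  | succ m ih =>
    have hsplit : (f ^ (m + 1)) x - (g ^ (m + 1)) x
        = f ((f ^ m) x - (g ^ m) x) + (f - g) ((g ^ m) x) := by
      simp only [pow_succ', Module.End.mul_apply, map_sub, LinearMap.sub_apply]
      abel
    rw [hsplit, succ_nsmul, ← add_assoc]
    exact add_mem (apply_mem_degreeGT_of_sub_mem_degreeGT hg hfg ih)
      (hfg _ _ (pow_apply_mem_of_homogeneous hg m hx))

theorem pow_apply_eq_zero_of_lowest_component [DecidableEq ι] [DirectSum.Decomposition 𝒜]
    {m : ℕ} {n : ι} {x : M} (hx : x ∈ 𝒜 n) (hfx : (f ^ m) x = 0) : (g ^ m) x = 0 := by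
  have h := pow_apply_sub_pow_apply_mem_degreeGT hg hfg m hx
  rw [hfx, zero_sub, neg_mem_iff] at h
  exact eq_zero_of_mem_of_mem_degreeGT (pow_apply_mem_of_homogeneous hg m hx) h

end lowestComponent

theorem exists_pow_apply_eq_zero_of_homogeneous {ι R M : Type*} [DecidableEq ι] [CommRing R]
    [AddCommGroup M] [Module R M] (𝒜 : ι → Submodule R M) [DirectSum.Decomposition 𝒜]
    (g : Module.End R M) (hg : ∀ n, ∀ x ∈ 𝒜 n, ∃ m : ℕ, (g ^ m) x = 0) (x : M) :
    ∃ m : ℕ, (g ^ m) x = 0 := by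
  suffices x ∈ g.maxGenEigenspace 0 by simpa using this
  induction x using DirectSum.Decomposition.inductionOn 𝒜 with
  | zero => exact zero_mem _
  | homogeneous y => simpa using hg _ y y.2
  | add y z hy hz => exact add_mem hy hz

theorem lowest_homogeneous_component_lnd_general (K : Type*) [Field K]
    (A : Type*) [CommRing A] [Algebra K A]
    (𝒜 : ℤ → Submodule K A) [GradedAlgebra 𝒜]
    (δ : Derivation K A A)
    (hδ : ∀ f : A, ∃ m : ℕ, (δ.toLinearMap ^ m) f = 0)
    (l k : ℤ) (hlk : l ≤ k)
    (δc : ℤ → Derivation K A A)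
    (hhom : ∀ (i : ℤ) (n : ℤ) (a : A), a ∈ 𝒜 n → δc i a ∈ 𝒜 (n + i))
    (hsum : ∀ a : A, δ a = ∑ i ∈ Finset.Icc l k, δc i a) :
    ∀ f : A, ∃ m : ℕ, ((δc l).toLinearMap ^ m) f = 0 := by
  have hrest : ∀ n, ∀ a ∈ 𝒜 n,
      (δ.toLinearMap - (δc l).toLinearMap) a ∈ degreeGT 𝒜 (n + l) := by
    intro n a ha
    have hl : l ∈ Finset.Icc l k := Finset.mem_Icc.2 ⟨le_rfl, hlk⟩
    rw [LinearMap.sub_apply, Derivation.coeFn_coe, Derivation.coeFn_coe, hsum a,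
      ← Finset.add_sum_erase _ _ hl, add_sub_cancel_left]
    refine Submodule.sum_mem _ fun i hi => ?_
    obtain ⟨hil, hi⟩ := Finset.mem_erase.1 hi
    have hli : l < i := lt_of_le_of_ne (Finset.mem_Icc.1 hi).1 (Ne.symm hil)
    exact le_degreeGT (by omega) (hhom i n a ha)
  refine exists_pow_apply_eq_zero_of_homogeneous 𝒜 _ fun n a ha => ?_
  obtain ⟨m, hm⟩ := hδ a
  exact ⟨m, pow_apply_eq_zero_of_lowest_component (hhom l) hrest ha hm⟩

/-- Let `A` be a `ℤ`-graded commutative `K`-algebra (`char K = 0`) and `δ` a locally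
nilpotent derivation of `A`. Write `δ = δ_l + δ_{l+1} + ⋯ + δ_k` as a sum of homogeneous
components with `δ_l ≠ 0` the lowest component. Then `δ_l` is a locally nilpotent
derivation. -/
theorem lowest_homogeneous_component_lnd (K : Type*) [Field K] [CharZero K]
    (A : Type*) [CommRing A] [Algebra K A]
    (𝒜 : ℤ → Submodule K A) [GradedAlgebra 𝒜]
    (δ : Derivation K A A)
    (hδ : ∀ f : A, ∃ m : ℕ, (δ.toLinearMap ^ m) f = 0)
    (l k : ℤ) (hlk : l ≤ k)
    (δc : ℤ → Derivation K A A)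
    (hhom : ∀ (i : ℤ) (n : ℤ) (a : A), a ∈ 𝒜 n → δc i a ∈ 𝒜 (n + i))
    (hsum : ∀ a : A, δ a = ∑ i ∈ Finset.Icc l k, δc i a)
    (hlow : δc l ≠ 0) :
    ∀ f : A, ∃ m : ℕ, ((δc l).toLinearMap ^ m) f = 0 :=
  lowest_homogeneous_component_lnd_general K A 𝒜 δ hδ l k hlk δc hhom hsum
end

section
/- Let M = ℤⁿ and let σ ⊂ M_ℚ ⊗ be a pointed rational polyhedral cone with dual cone σ^∨. For a Demazure root e with distinguished ray ρ (with primitive generator p_ρ), the formula ∂_e(χ^m) = ⟨p_ρ, m⟩ χ^{e+m} defines a locally nilpotent derivation of the semigroup algebra K[σ^∨ ∩ M]. -/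
/-!
Write `w m = ⟨p, m⟩` and `t m = m + e`. An operator `χ^m ↦ w m • χ^{t m}` on a monoid algebra with
`w` additive is a derivation as soon as `t (m + m') = m' + t m` whenever `w m ≠ 0`; for a
Demazure root this holds because `⟨p, m⟩ > 0` forces `m + e ∈ σ^∨`, all other rays pairing
nonnegatively with `e`. Each application lowers `⟨p, m⟩ ≥ 0` by one, and monomials with
`⟨p, m⟩ = 0` are killed, so the derivation is locally nilpotent.
-/

open scoped BigOperators
open Matrix

/-- The monoid of lattice points of the dual cone `σ^∨`: all `m ∈ M = ℤⁿ` pairing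
nonnegatively with every ray generator of the cone `σ`. -/
def dualConeMonoid (n : ℕ) (rays : Finset (Fin n → ℤ)) : AddSubmonoid (Fin n → ℤ) where
  carrier := {m | ∀ r ∈ rays, 0 ≤ r ⬝ᵥ m}
  zero_mem' := by
    intro r _
    simp [dotProduct]
  add_mem' := by
    intro a b ha hb r hr
    have := ha r hr
    have := hb r hr
    simp only [dotProduct_add]
    omega

namespace AddMonoidAlgebra

section CommSemiring

variable {R S : Type*} [CommSemiring R] [AddCommMonoid S] (w : S →+ R) (t : S → S)

noncomputable def weightedShift : AddMonoidAlgebra R S →ₗ[R] AddMonoidAlgebra R S :=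
  Finsupp.lsum R (fun m => w m • lsingle (t m)) ∘ₗ (coeffLinearEquiv R).toLinearMap

variable {w t}

theorem weightedShift_single (m : S) (a : R) :
    weightedShift w t (single m a) = w m • single (t m) a := by
  simp [weightedShift]

theorem weightedShift_mul (ht : ∀ m m', w m ≠ 0 → t (m + m') = m' + t m)
    (f g : AddMonoidAlgebra R S) :
    weightedShift w t (f * g) = f • weightedShift w t g + g • weightedShift w t f := by
  have hshift : ∀ m m' (c : R), w m • single (t (m + m')) c = w m • single (m' + t m) c := by
    intro m m' c
    by_cases hm : w m = 0
    · simp [hm]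
    · rw [ht m m' hm]
  induction f using induction_linear with
  | zero => simp
  | add f₁ f₂ h₁ h₂ =>
    simp only [add_mul, map_add, h₁, h₂, smul_eq_mul]
    ring
  | single m a =>
    induction g using induction_linear with
    | zero => simp
    | add g₁ g₂ h₁ h₂ =>
      simp only [mul_add, map_add, h₁, h₂, smul_eq_mul]
      ring
    | single m' b =>
      rw [single_mul_single, weightedShift_single, weightedShift_single, weightedShift_single,
        map_add, add_smul, hshift, add_comm m m', hshift, smul_eq_mul, smul_eq_mul, mul_smul_comm,
        mul_smul_comm, single_mul_single, single_mul_single, mul_comm b a, add_comm]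

theorem weightedShift_pow_single_eq_zero (ν : S → ℕ) (hν : ∀ m, w m ≠ 0 → ν (t m) < ν m)
    {N : ℕ} {m : S} (hm : ν m < N) (a : R) : (weightedShift w t ^ N) (single m a) = 0 := by
  induction N generalizing m with
  | zero => omega
  | succ N ih =>
    rw [pow_succ, Module.End.mul_apply, weightedShift_single, map_smul]
    by_cases hw : w m = 0
    · rw [hw, zero_smul]
    · rw [ih (by have := hν m hw; omega), smul_zero]

end CommSemiring

theorem exists_pow_weightedShift_apply_eq_zero {R S : Type*} [CommRing R] [AddCommMonoid S]
    {w : S →+ R} {t : S → S} (ν : S → ℕ) (hν : ∀ m, w m ≠ 0 → ν (t m) < ν m)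
    (f : AddMonoidAlgebra R S) : ∃ N, (weightedShift w t ^ N) f = 0 := by
  suffices f ∈ Module.End.maxGenEigenspace (weightedShift w t) 0 by
    simpa [Module.End.mem_maxGenEigenspace] using this
  induction f using induction_linear with
  | zero => exact zero_mem _
  | add f g hf hg => exact add_mem hf hg
  | single m a =>
    exact (Module.End.mem_maxGenEigenspace _ _ _).2
      ⟨ν m + 1, by simpa using weightedShift_pow_single_eq_zero ν hν (Nat.lt_succ_self _) a⟩

end AddMonoidAlgebra

structure IsDemazureRoot {n : ℕ} (rays : Finset (Fin n → ℤ)) (p e : Fin n → ℤ) : Prop where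
  mem : p ∈ rays
  dotProduct_eq : p ⬝ᵥ e = -1
  dotProduct_nonneg : ∀ q ∈ rays, q ≠ p → 0 ≤ q ⬝ᵥ e

/-- The junk value `m` off `σ^∨` is harmless: there `⟨p, m⟩ = 0` kills the monomial. -/
noncomputable def demazureShift (n : ℕ) (rays : Finset (Fin n → ℤ)) (e : Fin n → ℤ)
    (m : dualConeMonoid n rays) : dualConeMonoid n rays :=
  open scoped Classical in
  if h : (m : Fin n → ℤ) + e ∈ dualConeMonoid n rays then ⟨_, h⟩ else m

def dualConePairing (n : ℕ) (rays : Finset (Fin n → ℤ)) (p : Fin n → ℤ) (K : Type*) [AddGroupWithOne K] :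
    dualConeMonoid n rays →+ K :=
  AddMonoidHom.mk' (fun m => ((p ⬝ᵥ (m : Fin n → ℤ) : ℤ) : K)) fun m m' => by
    simp [dotProduct_add]

namespace IsDemazureRoot

variable {n : ℕ} {rays : Finset (Fin n → ℤ)} {p e : Fin n → ℤ}

theorem add_mem (he : IsDemazureRoot rays p e) {m : Fin n → ℤ}
    (hm : m ∈ dualConeMonoid n rays) (hpos : 0 < p ⬝ᵥ m) : m + e ∈ dualConeMonoid n rays := by
  intro r hr
  rw [dotProduct_add]
  by_cases hrp : r = p
  · subst hrp
    linarith [he.dotProduct_eq]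
  · linarith [he.dotProduct_nonneg r hr hrp, hm r hr]

theorem dotProduct_eq_zero (he : IsDemazureRoot rays p e) {m : Fin n → ℤ}
    (hm : m ∈ dualConeMonoid n rays) (hme : m + e ∉ dualConeMonoid n rays) : p ⬝ᵥ m = 0 :=
  le_antisymm (not_lt.1 fun hpos => hme (he.add_mem hm hpos)) (hm p he.mem)

theorem demazureShift_eq (he : IsDemazureRoot rays p e) {m : dualConeMonoid n rays}
    (hm : p ⬝ᵥ (m : Fin n → ℤ) ≠ 0) :
    (demazureShift n rays e m : Fin n → ℤ) = m + e := by
  have hmem := he.add_mem m.2 (lt_of_le_of_ne (m.2 p he.mem) hm.symm)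
  simp [demazureShift, hmem]

theorem demazureShift_add (he : IsDemazureRoot rays p e) {m : dualConeMonoid n rays}
    (m' : dualConeMonoid n rays) (hm : p ⬝ᵥ (m : Fin n → ℤ) ≠ 0) :
    demazureShift n rays e (m + m') = m' + demazureShift n rays e m := by
  have hmm' : p ⬝ᵥ ((m + m' : dualConeMonoid n rays) : Fin n → ℤ) ≠ 0 := by
    have hm₀ := m.2 p he.mem
    have hm₀' := m'.2 p he.mem
    rw [AddSubmonoid.coe_add, dotProduct_add]
    omega
  ext1
  rw [AddSubmonoid.coe_add, he.demazureShift_eq hm, he.demazureShift_eq hmm',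
    AddSubmonoid.coe_add]
  abel

theorem dotProduct_demazureShift (he : IsDemazureRoot rays p e) {m : dualConeMonoid n rays}
    (hm : p ⬝ᵥ (m : Fin n → ℤ) ≠ 0) :
    p ⬝ᵥ (demazureShift n rays e m : Fin n → ℤ) = p ⬝ᵥ (m : Fin n → ℤ) - 1 := by
  rw [he.demazureShift_eq hm, dotProduct_add, he.dotProduct_eq]
  ring

end IsDemazureRoot

theorem demazure_root_gives_lnd_general (n : ℕ) (rays : Finset (Fin n → ℤ))
    (p : Fin n → ℤ) (hp : p ∈ rays) (e : Fin n → ℤ)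
    (he₁ : p ⬝ᵥ e = -1) (he₂ : ∀ q ∈ rays, q ≠ p → 0 ≤ q ⬝ᵥ e)
    (K : Type*) [Field K] :
    ∃ D : Derivation K (AddMonoidAlgebra K ↥(dualConeMonoid n rays))
        (AddMonoidAlgebra K ↥(dualConeMonoid n rays)),
      (∀ (m : ↥(dualConeMonoid n rays)) (h : (↑m + e) ∈ dualConeMonoid n rays),
        D (AddMonoidAlgebra.single m 1) =
          ((p ⬝ᵥ (↑m : Fin n → ℤ) : ℤ) : K) •
            AddMonoidAlgebra.single (⟨↑m + e, h⟩ : ↥(dualConeMonoid n rays)) 1) ∧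
      (∀ m : ↥(dualConeMonoid n rays), (↑m + e) ∉ dualConeMonoid n rays →
        D (AddMonoidAlgebra.single m 1) = 0) ∧
      (∀ f : AddMonoidAlgebra K ↥(dualConeMonoid n rays),
        ∃ N : ℕ, (D.toLinearMap ^ N) f = 0) := by
  have he : IsDemazureRoot rays p e := ⟨hp, he₁, he₂⟩
  have hpairing : ∀ m, dualConePairing n rays p K m ≠ 0 → p ⬝ᵥ (m : Fin n → ℤ) ≠ 0 :=
    fun m hm h0 => hm (by simp [dualConePairing, h0])
  refine ⟨Derivation.mk' (AddMonoidAlgebra.weightedShift (dualConePairing n rays p K)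
      (demazureShift n rays e))
      (AddMonoidAlgebra.weightedShift_mul fun m m' hm => he.demazureShift_add m' (hpairing m hm)),
    fun m h => ?_, fun m h => ?_,
    AddMonoidAlgebra.exists_pow_weightedShift_apply_eq_zero (fun m => (p ⬝ᵥ (m : Fin n → ℤ)).toNat)
      fun m hm => ?_⟩
  · simp [AddMonoidAlgebra.weightedShift_single, demazureShift, h, dualConePairing]
  · simp [AddMonoidAlgebra.weightedShift_single, dualConePairing, he.dotProduct_eq_zero m.2 h]
  · have hpos := m.2 p he.mem
    have hne := hpairing m hm
    rw [he.dotProduct_demazureShift hne]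
    omega

/-- Let `σ ⊆ N_ℚ` be a pointed rational polyhedral cone with ray generators `rays`, and
let `e` be a Demazure root with distinguished ray generated by `p`. Then the formula
`∂_e(χ^m) = ⟨p, m⟩ χ^{e+m}` defines a locally nilpotent derivation of the semigroup
algebra `K[σ^∨ ∩ M]`. -/
theorem demazure_root_gives_lnd (n : ℕ) (rays : Finset (Fin n → ℤ))
    (hpointed : ∀ c : (Fin n → ℤ) → ℕ, ∑ r ∈ rays, c r • r = 0 →
      ∀ r ∈ rays, c r • r = 0)
    (p : Fin n → ℤ) (hp : p ∈ rays) (e : Fin n → ℤ)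
    (he₁ : p ⬝ᵥ e = -1) (he₂ : ∀ q ∈ rays, q ≠ p → 0 ≤ q ⬝ᵥ e)
    (K : Type*) [Field K] [CharZero K] :
    ∃ D : Derivation K (AddMonoidAlgebra K ↥(dualConeMonoid n rays))
        (AddMonoidAlgebra K ↥(dualConeMonoid n rays)),
      (∀ (m : ↥(dualConeMonoid n rays)) (h : (↑m + e) ∈ dualConeMonoid n rays),
        D (AddMonoidAlgebra.single m 1) =
          ((p ⬝ᵥ (↑m : Fin n → ℤ) : ℤ) : K) •
            AddMonoidAlgebra.single (⟨↑m + e, h⟩ : ↥(dualConeMonoid n rays)) 1) ∧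
      (∀ m : ↥(dualConeMonoid n rays), (↑m + e) ∉ dualConeMonoid n rays →
        D (AddMonoidAlgebra.single m 1) = 0) ∧
      (∀ f : AddMonoidAlgebra K ↥(dualConeMonoid n rays),
        ∃ N : ℕ, (D.toLinearMap ^ N) f = 0) :=
  demazure_root_gives_lnd_general n rays p hp e he₁ he₂ K
end

section
/- Let A = K[x²,xy,y²,x³,x²y,xy²,y³,z] ⊆ K[x,y,z] with char K = 0. Then the derivations ∂/∂z, y·∂/∂x, and x·∂/∂y of K[x,y,z] restrict to well-defined locally nilpotent derivations of A. -/
/-!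
Each of the three derivations sends every generator of `A` to an integer multiple of a
generator or to a constant, so by the Leibniz rule it preserves `A`. Local nilpotence is
inherited from `K[x,y,z]`, where `q • ∂/∂xᵢ`, for `q` free of `xᵢ`, strictly lowers the
`xᵢ`-degree of every polynomial it does not kill.
-/

open MvPolynomial

/-- The generating monomials `x², xy, y², x³, x²y, xy², y³, z` inside `K[x,y,z]`. -/
def genMonomials (K : Type*) [CommRing K] : Set (MvPolynomial (Fin 3) K) :=
  {X 0 ^ 2, X 0 * X 1, X 1 ^ 2, X 0 ^ 3, X 0 ^ 2 * X 1, X 0 * X 1 ^ 2, X 1 ^ 3, X 2}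

theorem Module.End.exists_pow_apply_eq_zero_of_degree_lt {R M : Type*} [Semiring R]
    [AddCommMonoid M] [Module R M] (L : Module.End R M) (deg : M → ℕ)
    (h : ∀ x, L x ≠ 0 → deg (L x) < deg x) (x : M) : ∃ n, (L ^ n) x = 0 := by
  suffices ∀ n x, deg x < n → (L ^ n) x = 0 from ⟨_, this _ x (Nat.lt_succ_self _)⟩
  intro n
  induction n with
  | zero => intro x hx; omega
  | succ n ih =>
    intro x hx
    rw [pow_succ, Module.End.mul_apply]
    by_cases hLx : L x = 0
    · rw [hLx, map_zero]
    · exact ih _ (by have := h x hLx; omega)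

namespace Derivation

variable {R S : Type*} [CommSemiring R] [CommSemiring S] [Algebra R S]

theorem mapsTo_adjoin (D : Derivation R S S) {s : Set S}
    (h : Set.MapsTo D s (Algebra.adjoin R s)) :
    Set.MapsTo D (Algebra.adjoin R s) (Algebra.adjoin R s) := by
  intro x hx
  induction hx using Algebra.adjoin_induction with
  | mem x hx => exact h hx
  | algebraMap r => simp
  | add x y _ _ hx hy => simpa using add_mem hx hy
  | mul x y hx' hy' hx hy =>
    rw [leibniz, smul_eq_mul, smul_eq_mul]
    exact add_mem (mul_mem hx' hy) (mul_mem hy' hx)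

def restrict (D : Derivation R S S) (A : Subalgebra R S) (h : Set.MapsTo D A A) :
    Derivation R A A where
  toFun a := ⟨D a, h a.2⟩
  map_add' a b := Subtype.ext (D.map_add a b)
  map_smul' r a := Subtype.ext (D.map_smul r a)
  map_one_eq_zero' := Subtype.ext D.map_one_eq_zero
  leibniz' a b := Subtype.ext (D.leibniz a b)

theorem exists_pow_restrict_apply_eq_zero (D : Derivation R S S) (A : Subalgebra R S)
    (h : Set.MapsTo D A A) (hD : ∀ x, ∃ n, (D.toLinearMap ^ n) x = 0) (a : A) :
    ∃ n, ((D.restrict A h).toLinearMap ^ n) a = 0 := by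
  obtain ⟨n, hn⟩ := hD a
  refine ⟨n, Subtype.ext ?_⟩
  have : Function.Semiconj Subtype.val (D.restrict A h) D := fun _ => rfl
  rw [Module.End.pow_apply] at hn ⊢
  exact (this.iterate_right n a).trans hn

end Derivation

namespace MvPolynomial

variable {R σ : Type*} [CommSemiring R] {i : σ} {f q : MvPolynomial σ R}

theorem degreeOf_pderiv_lt (h : pderiv i f ≠ 0) : degreeOf i (pderiv i f) < degreeOf i f := by
  have key : ∀ m ∈ (pderiv i f).support, m i < degreeOf i f := by
    intro m hm
    rw [mem_support_iff, coeff_pderiv] at hm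
    simpa using degreeOf_le_iff.1 (le_refl (degreeOf i f)) _
      (mem_support_iff.2 (left_ne_zero_of_mul hm))
  obtain ⟨m, hm⟩ := support_nonempty.2 h
  exact (degreeOf_lt_iff (Nat.zero_lt_of_lt (key m hm))).2 key

theorem degreeOf_mul_pderiv_lt (hq : degreeOf i q = 0) (h : q * pderiv i f ≠ 0) :
    degreeOf i (q * pderiv i f) < degreeOf i f :=
  calc degreeOf i (q * pderiv i f) ≤ degreeOf i q + degreeOf i (pderiv i f) := degreeOf_mul_le ..
    _ = degreeOf i (pderiv i f) := by rw [hq, zero_add]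
    _ < degreeOf i f := degreeOf_pderiv_lt (right_ne_zero_of_mul h)

theorem exists_pow_pderiv_apply_eq_zero (i : σ) (f : MvPolynomial σ R) :
    ∃ n, ((pderiv i).toLinearMap ^ n) f = 0 :=
  Module.End.exists_pow_apply_eq_zero_of_degree_lt _ (degreeOf i)
    (fun _ => degreeOf_pderiv_lt) f

theorem exists_pow_smul_pderiv_apply_eq_zero (hq : degreeOf i q = 0) (f : MvPolynomial σ R) :
    ∃ n, ((q • pderiv i).toLinearMap ^ n) f = 0 :=
  Module.End.exists_pow_apply_eq_zero_of_degree_lt _ (degreeOf i)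
    (fun _ => degreeOf_mul_pderiv_lt hq) f

end MvPolynomial

section GeneratorImages

variable (K : Type*) [CommRing K]

theorem genMonomials_subset_adjoin :
    genMonomials K ⊆ Algebra.adjoin K (genMonomials K) :=
  Algebra.subset_adjoin

theorem mapsTo_pderiv_two_genMonomials :
    Set.MapsTo (pderiv 2) (genMonomials K) (Algebra.adjoin K (genMonomials K)) := by
  simp only [Set.MapsTo, genMonomials, Set.mem_insert_iff, Set.mem_singleton_iff,
    forall_eq_or_imp, forall_eq]
  simp [pderiv_X]

theorem mapsTo_X_one_smul_pderiv_zero_genMonomials :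
    Set.MapsTo ⇑((X 1 : MvPolynomial (Fin 3) K) • (pderiv 0 : Derivation K _ _))
      (genMonomials K) (Algebra.adjoin K (genMonomials K)) := by
  simp only [Set.MapsTo, genMonomials, Set.mem_insert_iff, Set.mem_singleton_iff,
    forall_eq_or_imp, forall_eq]
  simp only [Fin.isValue, Derivation.leibniz_pow, Nat.add_one_sub_one, pow_one,
    Derivation.coe_smul, Pi.smul_apply, pderiv_X, Pi.single_eq_same, smul_eq_mul, mul_one,
    nsmul_eq_mul, Nat.cast_ofNat, SetLike.mem_coe, Derivation.leibniz, ne_eq, one_ne_zero,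
    not_false_eq_true, Pi.single_eq_of_ne, mul_zero, zero_add, zero_mem, Fin.reduceEq, and_self,
    and_true, true_and]
  -- each remaining image normalises to `g` or `g * n` with `g` a generator
  ring_nf
  refine ⟨?_, ?_, ?_, ?_, ?_⟩ <;>
    first
    | (apply genMonomials_subset_adjoin; simp [genMonomials]; done)
    | (refine mul_mem (genMonomials_subset_adjoin K ?_) (ofNat_mem _ _); simp [genMonomials])

theorem mapsTo_X_zero_smul_pderiv_one_genMonomials :
    Set.MapsTo ⇑((X 0 : MvPolynomial (Fin 3) K) • (pderiv 1 : Derivation K _ _))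
      (genMonomials K) (Algebra.adjoin K (genMonomials K)) := by
  simp only [Set.MapsTo, genMonomials, Set.mem_insert_iff, Set.mem_singleton_iff,
    forall_eq_or_imp, forall_eq]
  simp only [Fin.isValue, Derivation.leibniz_pow, Nat.add_one_sub_one, pow_one,
    Derivation.coe_smul, Pi.smul_apply, pderiv_X, ne_eq, zero_ne_one, not_false_eq_true,
    Pi.single_eq_of_ne, smul_eq_mul, mul_zero, SetLike.mem_coe, zero_mem, Derivation.leibniz,
    Pi.single_eq_same, mul_one, add_zero, nsmul_eq_mul, Nat.cast_ofNat, Fin.reduceEq, and_true,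
    true_and]
  ring_nf
  refine ⟨?_, ?_, ?_, ?_, ?_⟩ <;>
    first
    | (apply genMonomials_subset_adjoin; simp [genMonomials]; done)
    | (refine mul_mem (genMonomials_subset_adjoin K ?_) (ofNat_mem _ _); simp [genMonomials])

end GeneratorImages

theorem three_lnds_restrict_general (K : Type*) [Field K] :
    ∃ (D₁ D₂ D₃ : Derivation K (Algebra.adjoin K (genMonomials K))
        (Algebra.adjoin K (genMonomials K))),
      (∀ f : Algebra.adjoin K (genMonomials K),
        (D₁ f : MvPolynomial (Fin 3) K) = pderiv 2 (f : MvPolynomial (Fin 3) K)) ∧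
      (∀ f : Algebra.adjoin K (genMonomials K),
        (D₂ f : MvPolynomial (Fin 3) K) = X 1 * pderiv 0 (f : MvPolynomial (Fin 3) K)) ∧
      (∀ f : Algebra.adjoin K (genMonomials K),
        (D₃ f : MvPolynomial (Fin 3) K) = X 0 * pderiv 1 (f : MvPolynomial (Fin 3) K)) ∧
      (∀ f, ∃ m : ℕ, (D₁.toLinearMap ^ m) f = 0) ∧
      (∀ f, ∃ m : ℕ, (D₂.toLinearMap ^ m) f = 0) ∧
      (∀ f, ∃ m : ℕ, (D₃.toLinearMap ^ m) f = 0) := by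
  have h₁ := (pderiv 2).mapsTo_adjoin (mapsTo_pderiv_two_genMonomials K)
  have h₂ := Derivation.mapsTo_adjoin _ (mapsTo_X_one_smul_pderiv_zero_genMonomials K)
  have h₃ := Derivation.mapsTo_adjoin _ (mapsTo_X_zero_smul_pderiv_one_genMonomials K)
  refine ⟨(pderiv 2).restrict _ h₁, Derivation.restrict _ _ h₂, Derivation.restrict _ _ h₃,
    fun _ => rfl, fun _ => rfl, fun _ => rfl,
    Derivation.exists_pow_restrict_apply_eq_zero _ _ h₁ (exists_pow_pderiv_apply_eq_zero 2),
    Derivation.exists_pow_restrict_apply_eq_zero _ _ h₂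
      (exists_pow_smul_pderiv_apply_eq_zero (degreeOf_X_of_ne (by decide))),
    Derivation.exists_pow_restrict_apply_eq_zero _ _ h₃
      (exists_pow_smul_pderiv_apply_eq_zero (degreeOf_X_of_ne (by decide)))⟩

/-- Let `A = K[x²,xy,y²,x³,x²y,xy²,y³,z] ⊆ K[x,y,z]`, `char K = 0`. The derivations
`∂/∂z`, `y·∂/∂x` and `x·∂/∂y` of `K[x,y,z]` restrict to well-defined locally nilpotent
derivations of `A`. -/
theorem three_lnds_restrict (K : Type*) [Field K] [CharZero K] :
    ∃ (D₁ D₂ D₃ : Derivation K (Algebra.adjoin K (genMonomials K))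
        (Algebra.adjoin K (genMonomials K))),
      (∀ f : Algebra.adjoin K (genMonomials K),
        (D₁ f : MvPolynomial (Fin 3) K) = pderiv 2 (f : MvPolynomial (Fin 3) K)) ∧
      (∀ f : Algebra.adjoin K (genMonomials K),
        (D₂ f : MvPolynomial (Fin 3) K) = X 1 * pderiv 0 (f : MvPolynomial (Fin 3) K)) ∧
      (∀ f : Algebra.adjoin K (genMonomials K),
        (D₃ f : MvPolynomial (Fin 3) K) = X 0 * pderiv 1 (f : MvPolynomial (Fin 3) K)) ∧
      (∀ f, ∃ m : ℕ, (D₁.toLinearMap ^ m) f = 0) ∧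
      (∀ f, ∃ m : ℕ, (D₂.toLinearMap ^ m) f = 0) ∧
      (∀ f, ∃ m : ℕ, (D₃.toLinearMap ^ m) f = 0) :=
  three_lnds_restrict_general K
end

section
/- Let A = K[x²,xy,y²,x³,x²y,xy²,y³,z] ⊆ K[x,y,z], char K = 0, and let ∂₁ = ∂/∂z, ∂₂ = y·∂/∂x, ∂₃ = x·∂/∂y restricted to A. Then (Ker ∂₁) ∩ (Ker ∂₂) ∩ (Ker ∂₃) = K. Consequently the Makar-Limanov invariant ML(A) (intersection of kernels of all locally nilpotent derivations of A) equals K. -/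
open MvPolynomial

set_option synthInstance.maxHeartbeats 1000000
set_option maxHeartbeats 2000000

/-- The algebra `A = K[x²,xy,y²,x³,x²y,xy²,y³,z] ⊆ K[x,y,z]`. -/
noncomputable def AA (K : Type*) [CommRing K] : Subalgebra K (MvPolynomial (Fin 3) K) :=
  Algebra.adjoin K (genMonomials K)

/-!
A derivation `c ∂/∂xᵢ` with `c` free of `xᵢ` lowers the `xᵢ`-degree, so `∂₁ = ∂/∂z`, `∂₂ = y ∂/∂x`
and `∂₃ = x ∂/∂y` are locally nilpotent and `ML(A)` lies in their common kernel. As `x` and `y`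
are nonzerodivisors, an element of that kernel has all three partial derivatives zero, and in
characteristic zero this forces it to be a constant.
-/

namespace MvPolynomial

variable {R σ : Type*} [CommSemiring R]

theorem degreeOf_pderiv_le (i : σ) (f : MvPolynomial σ R) :
    degreeOf i (pderiv i f) ≤ degreeOf i f - 1 := by
  classical
  rw [degreeOf_le_iff]
  intro m hm
  rw [mem_support_iff, coeff_pderiv] at hm
  have := monomial_le_degreeOf i (mem_support_iff.mpr (left_ne_zero_of_mul hm))
  simp only [Finsupp.add_apply, Finsupp.single_eq_same] at this
  omega

theorem pderiv_eq_zero_of_degreeOf_eq_zero {i : σ} {f : MvPolynomial σ R}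
    (h : degreeOf i f = 0) : pderiv i f = 0 :=
  pderiv_eq_zero_of_notMem_vars fun hi => mem_vars_iff_degreeOf_ne_zero.mp hi h

theorem pow_smul_pderiv_apply_eq_zero {c : MvPolynomial σ R} {i : σ} (hc : degreeOf i c = 0)
    (p : MvPolynomial σ R) : ((c • pderiv i).toLinearMap ^ (degreeOf i p + 1)) p = 0 := by
  suffices ∀ n p, degreeOf i p ≤ n → ((c • pderiv i).toLinearMap ^ (n + 1)) p = 0 from
    this _ p le_rfl
  intro n
  induction n with
  | zero =>
    intro p hp
    simp [pderiv_eq_zero_of_degreeOf_eq_zero (Nat.le_zero.mp hp)]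
  | succ n ih =>
    intro p hp
    rw [pow_succ, Module.End.mul_apply]
    apply ih
    calc degreeOf i (c • pderiv i p) ≤ degreeOf i c + degreeOf i (pderiv i p) :=
          degreeOf_mul_le i c _
      _ ≤ n := by have := degreeOf_pderiv_le i p; omega

theorem eq_C_of_forall_pderiv_eq_zero [NoZeroDivisors R] [CharZero R] {f : MvPolynomial σ R}
    (h : ∀ i, pderiv i f = 0) : f = C (coeff 0 f) := by
  rw [← vars_eq_empty_iff_eq_C, Finset.eq_empty_iff_forall_notMem]
  intro i hi
  obtain ⟨m, hm, hmi⟩ := (mem_vars_iff_mem_support i).mp hi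
  have hle : Finsupp.single i 1 ≤ m :=
    Finsupp.single_le_iff.mpr (Nat.one_le_iff_ne_zero.mpr (Finsupp.mem_support_iff.mp hmi))
  have hcoeff := coeff_pderiv (i := i) f (m - Finsupp.single i 1)
  rw [h i, coeff_zero, tsub_add_cancel_of_le hle, eq_comm] at hcoeff
  exact mem_support_iff.mp hm ((mul_eq_zero.mp hcoeff).resolve_right (Nat.cast_add_one_ne_zero _))

end MvPolynomial

theorem Subalgebra.coe_pow_apply {R A : Type*} [CommSemiring R] [Semiring A] [Algebra R A] {S : Subalgebra R A}
    {D : Module.End R S} {F : Module.End R A} (hD : ∀ f : S, (D f : A) = F f) (n : ℕ) (f : S) :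
    ((D ^ n) f : A) = (F ^ n) f :=
  LinearMap.congr_fun (Module.End.commute_pow_left_of_commute (f := S.val.toLinearMap)
    (LinearMap.ext fun f => (hD f).symm) n) f |>.symm

section RestrictedDerivation

variable {R σ : Type*} [CommSemiring R] {S : Subalgebra R (MvPolynomial σ R)}
  {D : Derivation R S S} {c : MvPolynomial σ R} {i : σ}

theorem exists_pow_apply_eq_zero_of_coe_eq_mul_pderiv (hc : degreeOf i c = 0)
    (hD : ∀ f : S, (D f : MvPolynomial σ R) = c * pderiv i (f : MvPolynomial σ R)) (g : S) :
    ∃ m : ℕ, (D.toLinearMap ^ m) g = 0 := by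
  refine ⟨degreeOf i (g : MvPolynomial σ R) + 1, Subtype.ext ?_⟩
  rw [Subalgebra.coe_pow_apply (F := (c • pderiv i).toLinearMap) hD]
  exact pow_smul_pderiv_apply_eq_zero hc _

theorem pderiv_eq_zero_of_coe_eq_mul_pderiv [NoZeroDivisors R] (hc : c ≠ 0)
    (hD : ∀ f : S, (D f : MvPolynomial σ R) = c * pderiv i (f : MvPolynomial σ R)) {f : S}
    (hf : D f = 0) : pderiv i (f : MvPolynomial σ R) = 0 := by
  have := hD f
  rw [hf, ZeroMemClass.coe_zero, eq_comm] at this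
  exact (mul_eq_zero.mp this).resolve_left hc

end RestrictedDerivation

/-- Let `A = K[x²,xy,y²,x³,x²y,xy²,y³,z]`, `char K = 0`, and let `∂₁ = ∂/∂z`,
`∂₂ = y∂/∂x`, `∂₃ = x∂/∂y` restricted to `A`. Then `Ker ∂₁ ∩ Ker ∂₂ ∩ Ker ∂₃ = K`;
consequently the Makar-Limanov invariant `ML(A)`, the intersection of the kernels of all
locally nilpotent derivations of `A`, equals `K`. -/
theorem ML_of_A_trivial (K : Type*) [Field K] [CharZero K]
    (D₁ D₂ D₃ : Derivation K ↥(AA K) ↥(AA K))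
    (h₁ : ∀ f : ↥(AA K),
      (D₁ f : MvPolynomial (Fin 3) K) = pderiv 2 (f : MvPolynomial (Fin 3) K))
    (h₂ : ∀ f : ↥(AA K),
      (D₂ f : MvPolynomial (Fin 3) K) = X 1 * pderiv 0 (f : MvPolynomial (Fin 3) K))
    (h₃ : ∀ f : ↥(AA K),
      (D₃ f : MvPolynomial (Fin 3) K) = X 0 * pderiv 1 (f : MvPolynomial (Fin 3) K)) :
    (∀ f : ↥(AA K), D₁ f = 0 → D₂ f = 0 → D₃ f = 0 →
      ∃ c : K, f = algebraMap K ↥(AA K) c) ∧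
    (∀ f : ↥(AA K),
      (∀ D : Derivation K ↥(AA K) ↥(AA K),
        (∀ g, ∃ m : ℕ, (D.toLinearMap ^ m) g = 0) → D f = 0) →
      ∃ c : K, f = algebraMap K ↥(AA K) c) := by
  have h₁' (f : AA K) : (D₁ f : MvPolynomial (Fin 3) K) = 1 * pderiv 2 (f : _) :=
    (h₁ f).trans (one_mul _).symm
  have hker (f : AA K) (k₁ : D₁ f = 0) (k₂ : D₂ f = 0) (k₃ : D₃ f = 0) :
      ∃ c : K, f = algebraMap K (AA K) c := by
    have hpderiv : ∀ i, pderiv i (f : MvPolynomial (Fin 3) K) = 0 := by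
      intro i
      fin_cases i
      exacts [pderiv_eq_zero_of_coe_eq_mul_pderiv (X_ne_zero 1) h₂ k₂,
        pderiv_eq_zero_of_coe_eq_mul_pderiv (X_ne_zero 0) h₃ k₃,
        pderiv_eq_zero_of_coe_eq_mul_pderiv one_ne_zero h₁' k₁]
    exact ⟨_, Subtype.ext (eq_C_of_forall_pderiv_eq_zero hpderiv)⟩
  refine ⟨hker, fun f hf => hker f (hf D₁ ?_) (hf D₂ ?_) (hf D₃ ?_)⟩
  · exact exists_pow_apply_eq_zero_of_coe_eq_mul_pderiv (degreeOf_one 2) h₁'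
  · exact exists_pow_apply_eq_zero_of_coe_eq_mul_pderiv (degreeOf_X_of_ne (by decide)) h₂
  · exact exists_pow_apply_eq_zero_of_coe_eq_mul_pderiv (degreeOf_X_of_ne (by decide)) h₃
end
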